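/- For every r-multicomposition λ of n, the elements x_λ and u⁺_λ of the Ariki–Koike algebra H = H_{r,n} commute: x_λu⁺_λ = u⁺_λx_λ. -/

import Mathlib

/-!
Background formalization of the Ariki–Koike algebra `H = H_{r,n}` over a field `F`,
with parameters `q, Q_1, …, Q_r` (here `Q : ℕ → F`, 1-indexed), together with the
combinatorics of multicompositions, multipartitions, tableaux, the elements
`L_k`, `T_w`, `x_λ`, `u⁺_λ`, `m_λ`, `m_{st}`, `C(m;η)`, `𝔡^{(s)}_{d,t}`, `𝔩^{(s')}`, etc.

Multicompositions in `r` parts are encoded as functions `ℕ → List ℕ`, the component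
`λ^{(s)}` (for `1 ≤ s ≤ r`) being the list `lam s` of its row lengths (so
`λ^{(s)}_i = (lam s).getD (i-1) 0` and `ρ_s(λ) = (lam s).length`).

Tableaux: a `λ`-tableau `t` is encoded by the permutation `d(t) ∈ S_n` with
`t = t^λ · d(t)`; on 1-indexed letters a permutation `w` of `Fin n` acts via `permAct`.
-/

open scoped Classical

noncomputable section

namespace AK

/-- The Coxeter length of a permutation of `{0, …, n-1}`: the number of inversions. -/
def permLen {n : ℕ} (w : Equiv.Perm (Fin n)) : ℕ :=
  (Finset.univ.filter (fun p : Fin n × Fin n => p.1 < p.2 ∧ w p.2 < w p.1)).card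

/-- Action of a permutation of `Fin n` on the 1-indexed letters `{1, …, n}`. -/
def permAct {n : ℕ} (w : Equiv.Perm (Fin n)) (a : ℕ) : ℕ :=
  if h : 1 ≤ a ∧ a ≤ n then ((w ⟨a - 1, by omega⟩ : Fin n) : ℕ) + 1 else a

/-- `λ^{(s)}_i`, the length of the `i`-th row (1-indexed) of the `s`-th component. -/
def rowEntry (lam : ℕ → List ℕ) (s i : ℕ) : ℕ := (lam s).getD (i - 1) 0

/-- `λ̄_{(i,s)} = Σ_{j=1}^{s-1} |λ^{(j)}| + Σ_{i'=1}^{i} λ^{(s)}_{i'}`;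
in particular `bar lam s 0 = λ̄_{(s)}`. -/
def bar (lam : ℕ → List ℕ) (s i : ℕ) : ℕ :=
  (∑ j ∈ Finset.range (s - 1), (lam (j + 1)).sum) + ((lam s).take i).sum

/-- `lam` is an `r`-multicomposition of `n` (canonically represented: trivial
outside components `1, …, r`). -/
def IsMulticomp (r n : ℕ) (lam : ℕ → List ℕ) : Prop :=
  (∑ s ∈ Finset.Icc 1 r, (lam s).sum) = n ∧ ∀ s, s = 0 ∨ r < s → lam s = []

/-- every component is a partition (weakly decreasing, with positive rows). -/
def IsMultipartition (lam : ℕ → List ℕ) : Prop :=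
  ∀ s, (lam s).Pairwise (· ≥ ·) ∧ ∀ x ∈ lam s, 0 < x

/-- The dominance order `λ ⊴ μ`. -/
def Dominates (lam mu : ℕ → List ℕ) : Prop := ∀ l s, bar lam l s ≤ bar mu l s

/-- Strict dominance `λ ◁ μ`. -/
def DomStrict (lam mu : ℕ → List ℕ) : Prop := Dominates lam mu ∧ lam ≠ mu

/-- The diagram `[λ]` as a finset of nodes `(i, j, k)` (row, column, component),
all 1-indexed. -/
def diagF (r n : ℕ) (lam : ℕ → List ℕ) : Finset (ℕ × ℕ × ℕ) :=
  ((Finset.Icc 1 n) ×ˢ (Finset.Icc 1 n) ×ˢ (Finset.Icc 1 r)).filter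
    (fun x => x.2.1 ≤ rowEntry lam x.2.2 x.1)

/-- The entry of the row-reading tableau `t^λ` at the node `x = (i,j,k)`. -/
def tEntry (lam : ℕ → List ℕ) (x : ℕ × ℕ × ℕ) : ℕ := bar lam x.2.2 (x.1 - 1) + x.2.1

/-- The (1-indexed) entry `a` lies in row `i` of component `s` of `t^λ`. -/
def InRow (lam : ℕ → List ℕ) (s i a : ℕ) : Prop := bar lam s (i - 1) < a ∧ a ≤ bar lam s i

/-- The (row, component) pair of the row of `t^λ` containing the entry `a`. -/
def rowcompOf (r : ℕ) (lam : ℕ → List ℕ) (a : ℕ) : ℕ × ℕ :=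
  if h : ∃ p : ℕ × ℕ, 1 ≤ p.1 ∧ 1 ≤ p.2 ∧ p.2 ≤ r ∧ InRow lam p.2 p.1 a then h.choose
  else (0, 0)

/-- `w` stabilizes the rows of `t^λ`. -/
def RowStab (r n : ℕ) (lam : ℕ → List ℕ) (w : Equiv.Perm (Fin n)) : Prop :=
  ∀ a : Fin n, ∀ s i, 1 ≤ s → s ≤ r → 1 ≤ i →
    InRow lam s i ((a : ℕ) + 1) → InRow lam s i (permAct w ((a : ℕ) + 1))

/-- The `λ`-tableau `t^λ · w` is standard (entries increase along rows and down
columns of every component). -/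
def IsStd (r n : ℕ) (lam : ℕ → List ℕ) (w : Equiv.Perm (Fin n)) : Prop :=
  (∀ x ∈ diagF r n lam, (x.1, x.2.1 + 1, x.2.2) ∈ diagF r n lam →
      permAct w (tEntry lam x) < permAct w (tEntry lam (x.1, x.2.1 + 1, x.2.2))) ∧
  (∀ x ∈ diagF r n lam, (x.1 + 1, x.2.1, x.2.2) ∈ diagF r n lam →
      permAct w (tEntry lam x) < permAct w (tEntry lam (x.1 + 1, x.2.1, x.2.2)))

/-- `w` lies in `S_{(m,η)}` (it fixes all letters outside `(m, m + |η|]`) and it keeps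
row standard the `η`-tableau with entries `m+1, …, m+|η|` entered in order along its
rows.  These permutations index the summands of `C(m ; η)`. -/
def KeepsRowStd (n m : ℕ) (eta : List ℕ) (w : Equiv.Perm (Fin n)) : Prop :=
  (∀ a : Fin n, ((a : ℕ) + 1 ≤ m ∨ m + eta.sum < (a : ℕ) + 1) → w a = a) ∧
  ∀ d j, j + 1 < eta.getD d 0 →
    permAct w (m + (eta.take d).sum + j + 1) < permAct w (m + (eta.take d).sum + j + 2)

/-- `(s, d, t) ∈ def(λ, 𝔡)`. -/
def dDef (r : ℕ) (lam : ℕ → List ℕ) (s d t : ℕ) : Prop :=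
  1 ≤ s ∧ s ≤ r ∧ 1 ≤ d ∧ d < (lam s).length ∧ 1 ≤ t ∧ t ≤ rowEntry lam s (d + 1)

/-- `s' ∈ def(λ, 𝔩)`. -/
def lDef (r : ℕ) (lam : ℕ → List ℕ) (s' : ℕ) : Prop :=
  1 ≤ s' ∧ s' ≤ r - 1 ∧ lam (s' + 1) ≠ []

/-- `S` (a function on nodes, valued in pairs `(i, k)` = (row, component)) is a
`ν`-tableau of type `λ`. -/
def IsTypeTab (r n : ℕ) (nu lam : ℕ → List ℕ) (S : ℕ × ℕ × ℕ → ℕ × ℕ) : Prop :=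
  ∀ i0 k0, 1 ≤ i0 → 1 ≤ k0 → k0 ≤ r →
    ((diagF r n nu).filter (fun x => S x = (i0, k0))).card = rowEntry lam k0 i0

/-- the order `⪯` on entries `(i,k)`. -/
def entryLE (p p' : ℕ × ℕ) : Prop := p.2 < p'.2 ∨ (p.2 = p'.2 ∧ p.1 ≤ p'.1)

/-- the strict order `≺` on entries `(i,k)`. -/
def entryLT (p p' : ℕ × ℕ) : Prop := p.2 < p'.2 ∨ (p.2 = p'.2 ∧ p.1 < p'.1)

/-- `S` is a semistandard `ν`-tableau of type `λ`, i.e. `S ∈ T₀(ν,λ)`. -/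
def IsSemistandard (r n : ℕ) (nu lam : ℕ → List ℕ) (S : ℕ × ℕ × ℕ → ℕ × ℕ) : Prop :=
  IsTypeTab r n nu lam S ∧
  (∀ x ∈ diagF r n nu, (x.1, x.2.1 + 1, x.2.2) ∈ diagF r n nu →
      entryLE (S x) (S (x.1, x.2.1 + 1, x.2.2))) ∧
  (∀ x ∈ diagF r n nu, (x.1 + 1, x.2.1, x.2.2) ∈ diagF r n nu →
      entryLT (S x) (S (x.1 + 1, x.2.1, x.2.2))) ∧
  (∀ x ∈ diagF r n nu, x.2.2 ≤ (S x).2)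

/-- `λ(t)` for the `ν`-tableau `t = t^ν · w`: the `ν`-tableau of type `λ` sending a
node `x` to the (row, component) of `t^λ` containing the entry `t(x)`. -/
def lamOf (r : ℕ) {n : ℕ} (lam nu : ℕ → List ℕ) (w : Equiv.Perm (Fin n))
    (x : ℕ × ℕ × ℕ) : ℕ × ℕ :=
  rowcompOf r lam (permAct w (tEntry nu x))

/-- `w` encodes the row-standard `λ`-tableau `t_S = t^λ · w` associated with a
`ν`-tableau `S` of type `λ`:  the tableau `t^λ · w` is row standard, and the entry
occupying node `x` in `t^ν` occupies a node in row/component `S x` of `t^λ · w`. -/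
def wSpec (r n : ℕ) (lam nu : ℕ → List ℕ) (S : ℕ × ℕ × ℕ → ℕ × ℕ)
    (w : Equiv.Perm (Fin n)) : Prop :=
  (∀ x ∈ diagF r n lam, (x.1, x.2.1 + 1, x.2.2) ∈ diagF r n lam →
      permAct w (tEntry lam x) < permAct w (tEntry lam (x.1, x.2.1 + 1, x.2.2))) ∧
  (∀ x ∈ diagF r n nu, rowcompOf r lam (permAct w⁻¹ (tEntry nu x)) = S x)

/-- The permutation `w` with `t_S = t^λ · w`. -/
def wS (r n : ℕ) (lam nu : ℕ → List ℕ) (S : ℕ × ℕ × ℕ → ℕ × ℕ) : Equiv.Perm (Fin n) :=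
  if h : ∃ w, wSpec r n lam nu S w then h.choose else 1

/-- `S^{(i,j)}_{(k,l)}`: the number of entries equal to `(i,j)` in row `k` of
component `l` of `S`. -/
def Scount (r n : ℕ) (nu : ℕ → List ℕ) (S : ℕ × ℕ × ℕ → ℕ × ℕ) (i j k l : ℕ) : ℕ :=
  ((diagF r n nu).filter (fun x => x.1 = k ∧ x.2.2 = l ∧ S x = (i, j))).card

/-- The composition `Γ_{(x,y)}` attached to `S`:
`(S^{(x,y)}_{(x,y)}, …, S^{(ρ_y(λ),y)}_{(x,y)}, S^{(1,y+1)}_{(x,y)}, …, S^{(ρ_r(λ),r)}_{(x,y)})`. -/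
def Gamma (r n : ℕ) (lam nu : ℕ → List ℕ) (S : ℕ × ℕ × ℕ → ℕ × ℕ) (x y : ℕ) : List ℕ :=
  ((List.range (r + 1 - y)).map (fun c' =>
    (List.range ((lam (y + c')).length + 1 - (if c' = 0 then x else 1))).map
      (fun i' => Scount r n nu S ((if c' = 0 then x else 1) + i') (y + c') x y))).flatten

/-- The permutation agreeing with `w` on the letters `{lo+1, …, hi}` and fixing all
other letters (when it exists). -/
def restrictPerm {n : ℕ} (w : Equiv.Perm (Fin n)) (lo hi : ℕ) : Equiv.Perm (Fin n) :=
  if h : ∃ u : Equiv.Perm (Fin n),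
      (∀ a : Fin n, (lo < (a : ℕ) + 1 ∧ (a : ℕ) + 1 ≤ hi) → u a = w a) ∧
      (∀ a : Fin n, ¬(lo < (a : ℕ) + 1 ∧ (a : ℕ) + 1 ≤ hi) → u a = a)
    then h.choose else 1

/-- The entries of the tableaux `t_{S(i)}`:  `t_{S(0)} = t_S`; and `t_{S(i+1)}` is
obtained from `t_{S(i)}` by making the entries of the first `i+1` components equal to
those of `t^λ` and relabelling the entries `x_1 < ⋯ < x_τ` of the remaining components
that are at most `ν̄_{(i+2)}` via `x_k ↦ λ̄_{(i+2)} + k`. -/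
def tabS (r n : ℕ) (lam nu : ℕ → List ℕ) (S : ℕ × ℕ × ℕ → ℕ × ℕ) :
    ℕ → (ℕ × ℕ × ℕ) → ℕ
  | 0 => fun x => permAct (wS r n lam nu S) (tEntry lam x)
  | (i + 1) => fun x =>
      if x.2.2 ≤ i + 1 then tEntry lam x
      else if tabS r n lam nu S i x ≤ bar nu (i + 2) 0 then
        bar lam (i + 2) 0 +
          ((diagF r n lam).filter (fun x' =>
            i + 1 < x'.2.2 ∧ tabS r n lam nu S i x' ≤ bar nu (i + 2) 0 ∧
              tabS r n lam nu S i x' ≤ tabS r n lam nu S i x)).card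
      else tabS r n lam nu S i x

/-- The permutation `w_{S(i)}` with `t_{S(i)} = t^λ · w_{S(i)}`. -/
def wSi (r n : ℕ) (lam nu : ℕ → List ℕ) (S : ℕ × ℕ × ℕ → ℕ × ℕ) (i : ℕ) :
    Equiv.Perm (Fin n) :=
  if h : ∃ w : Equiv.Perm (Fin n),
      ∀ x ∈ diagF r n lam, permAct w (tEntry lam x) = tabS r n lam nu S i x
    then h.choose else 1

/-- The permutation `w_i` with `t_{S(i-1)} = t_{S(i)} · w_i`. -/
def wStep (r n : ℕ) (lam nu : ℕ → List ℕ) (S : ℕ × ℕ × ℕ → ℕ × ℕ) (i : ℕ) :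
    Equiv.Perm (Fin n) :=
  if h : ∃ w : Equiv.Perm (Fin n),
      ∀ x ∈ diagF r n lam, tabS r n lam nu S (i - 1) x = permAct w (tabS r n lam nu S i x)
    then h.choose else 1

/-- The multicomposition `λ · 𝔡^{(s)}_{d,t}`. -/
def dShift (lam : ℕ → List ℕ) (s d t : ℕ) : ℕ → List ℕ := fun k =>
  if k = s then ((lam s).set (d - 1) (rowEntry lam s d + t)).set d (rowEntry lam s (d + 1) - t)
  else lam k

/-- The multicomposition `λ · 𝔩^{(s')}`. -/
def lShift (lam : ℕ → List ℕ) (s' : ℕ) : ℕ → List ℕ := fun k =>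
  if k = s' then lam s' ++ [1]
  else if k = s' + 1 then (lam (s' + 1)).set 0 (rowEntry lam (s' + 1) 1 - 1)
  else lam k

/-- The (1-indexed) entry `a` lies in component `s` of `t^λ`. -/
def InComp (lam : ℕ → List ℕ) (s a : ℕ) : Prop :=
  bar lam s 0 < a ∧ a ≤ bar lam s ((lam s).length)

/-- An algebra `H` equipped with the structure of the Ariki–Koike algebra
`H_{r,n}` with parameters `q` and `Q 1, …, Q r`: distinguished generators
`T 0, …, T (n-1)` satisfying the defining relations, together with the elements
`T_w` (determined by `T_w = T_{i_1} ⋯ T_{i_k}` for any reduced expression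
`w = s_{i_1} ⋯ s_{i_k}`). -/
structure AKPre (F : Type*) [Field F] (q : F) (r n : ℕ) (Q : ℕ → F)
    (H : Type*) [Ring H] [Algebra F H] where
  T : ℕ → H
  Tw : Equiv.Perm (Fin n) → H
  rel_T0 : ((List.range r).map (fun l => T 0 - algebraMap F H (Q (l + 1)))).prod = 0
  rel_T0T1 : 2 ≤ n → T 0 * T 1 * T 0 * T 1 = T 1 * T 0 * T 1 * T 0
  rel_quad : ∀ i, 1 ≤ i → i < n → (T i - algebraMap F H q) * (T i + 1) = 0
  rel_braid : ∀ i, 1 ≤ i → i + 1 < n → T i * T (i + 1) * T i = T (i + 1) * T i * T (i + 1)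
  rel_comm : ∀ i j, i + 1 < j → j < n → T i * T j = T j * T i
  Tw_one : Tw 1 = 1
  Tw_simple : ∀ i, 1 ≤ i → ∀ h2 : i < n,
    Tw (Equiv.swap ⟨i - 1, lt_of_le_of_lt (Nat.sub_le i 1) h2⟩ ⟨i, h2⟩) = T i
  Tw_mul : ∀ u v : Equiv.Perm (Fin n),
    permLen (u * v) = permLen u + permLen v → Tw (u * v) = Tw u * Tw v

namespace AKPre

variable {F : Type*} [Field F] {q : F} {r n : ℕ} {Q : ℕ → F}
  {H : Type*} [Ring H] [Algebra F H]

/-- The Jucys–Murphy type element `L_k = q^{1-k} T_{k-1} ⋯ T_1 T_0 T_1 ⋯ T_{k-1}`. -/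
def L (A : AKPre F q r n Q H) (k : ℕ) : H :=
  algebraMap F H (q ^ (1 - (k : ℤ))) *
    (((List.range (k - 1)).reverse.map (fun i => A.T (i + 1))).prod * A.T 0 *
      ((List.range (k - 1)).map (fun i => A.T (i + 1))).prod)

/-- `u⁺_λ = ∏_{s=2}^{r} ∏_{i=1}^{λ̄_{(s)}} (L_i − Q_s)`. -/
def uplus (A : AKPre F q r n Q H) (lam : ℕ → List ℕ) : H :=
  ((List.range (r - 1)).map (fun t =>
    ((List.range (bar lam (t + 2) 0)).map
      (fun i => A.L (i + 1) - algebraMap F H (Q (t + 2)))).prod)).prod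

/-- `x_λ`: the sum of the `T_w` over the `w ∈ S_n` stabilizing the rows of `t^λ`. -/
def x (A : AKPre F q r n Q H) (lam : ℕ → List ℕ) : H :=
  ∑ w ∈ Finset.univ.filter (fun w : Equiv.Perm (Fin n) => RowStab r n lam w), A.Tw w

/-- `m_λ = x_λ u⁺_λ`. -/
def m (A : AKPre F q r n Q H) (lam : ℕ → List ℕ) : H := A.x lam * A.uplus lam

/-- `m_{st} = T_{d(s)}^* m_λ T_{d(t)}`, where the standard tableaux `s, t` are encoded
by the permutations `u = d(s)`, `v = d(t)`. -/
def mst (A : AKPre F q r n Q H) (lam : ℕ → List ℕ) (u v : Equiv.Perm (Fin n)) : H :=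
  A.Tw u⁻¹ * A.m lam * A.Tw v

/-- The set `{m_{st} : s, t ∈ Std(μ), λ ◁ μ}` spanning `Ȟ^λ`. -/
def mstSet (A : AKPre F q r n Q H) (lam : ℕ → List ℕ) : Set H :=
  {z | ∃ mu u v, IsMulticomp r n mu ∧ IsMultipartition mu ∧ DomStrict lam mu ∧
        IsStd r n mu u ∧ IsStd r n mu v ∧ z = A.mst mu u v}

/-- The ideal `Ȟ^λ` (as a right ideal, i.e. a submodule for the right action of `H`,
encoded as a module over `Hᵐᵒᵖ`). -/
def Hcheck (A : AKPre F q r n Q H) (lam : ℕ → List ℕ) : Submodule Hᵐᵒᵖ H :=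
  Submodule.span Hᵐᵒᵖ (A.mstSet lam)

/-- The right ideal `M^λ = m_λ H`. -/
def Mmod (A : AKPre F q r n Q H) (lam : ℕ → List ℕ) : Submodule Hᵐᵒᵖ H :=
  Submodule.span Hᵐᵒᵖ {A.m lam}

/-- `C(m ; η)`. -/
def C (A : AKPre F q r n Q H) (mm : ℕ) (eta : List ℕ) : H :=
  ∑ w ∈ Finset.univ.filter (fun w : Equiv.Perm (Fin n) => KeepsRowStd n mm eta w), A.Tw w

/-- `𝔡^{(s)}_{d,t} = C(λ̄_{(d-1,s)} ; (λ^{(s)}_d, t))`. -/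
def dE (A : AKPre F q r n Q H) (lam : ℕ → List ℕ) (s d t : ℕ) : H :=
  A.C (bar lam s (d - 1)) [rowEntry lam s d, t]

/-- `𝔩^{(s')} = L_{λ̄_{(s'+1)}+1} − Q_{s'+1}`. -/
def lE (A : AKPre F q r n Q H) (lam : ℕ → List ℕ) (s' : ℕ) : H :=
  A.L (bar lam (s' + 1) 0 + 1) - algebraMap F H (Q (s' + 1))

/-- The generating set `{m_λ 𝔡^{(s)}_{d,t}} ∪ {m_λ 𝔩^{(s')}}` of the ideal `𝔍`. -/
def genSet (A : AKPre F q r n Q H) (lam : ℕ → List ℕ) : Set H :=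
  {z | (∃ s d t, dDef r lam s d t ∧ z = A.m lam * A.dE lam s d t) ∨
       (∃ s', lDef r lam s' ∧ z = A.m lam * A.lE lam s')}

/-- The right ideal `𝔍` generated by the `m_λ 𝔡^{(s)}_{d,t}` and the `m_λ 𝔩^{(s')}`. -/
def J (A : AKPre F q r n Q H) (lam : ℕ → List ℕ) : Submodule Hᵐᵒᵖ H :=
  Submodule.span Hᵐᵒᵖ (A.genSet lam)

/-- `m_{S t} = Σ_{s ∈ Std(ν), λ(s) = S} m_{s t}` for `S` a `ν`-tableau of type `λ`
(`t = t^ν · v`). -/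
def mS (A : AKPre F q r n Q H) (nu lam : ℕ → List ℕ) (S : ℕ × ℕ × ℕ → ℕ × ℕ)
    (v : Equiv.Perm (Fin n)) : H :=
  ∑ u ∈ Finset.univ.filter (fun u : Equiv.Perm (Fin n) =>
      IsStd r n nu u ∧ ∀ x ∈ diagF r n nu, lamOf r lam nu u x = S x),
    A.mst nu u v

/-- `T_S`. -/
def TS (A : AKPre F q r n Q H) (lam nu : ℕ → List ℕ) (S : ℕ × ℕ × ℕ → ℕ × ℕ) : H :=
  A.Tw (wS r n lam nu S)

/-- `∏_{y=1}^{r} ∏_{x=1}^{ρ_y(ν)} C(ν̄_{(x−1,y)} ; Γ_{(x,y)})`. -/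
def bigC (A : AKPre F q r n Q H) (lam nu : ℕ → List ℕ) (S : ℕ × ℕ × ℕ → ℕ × ℕ) : H :=
  ((List.range r).map (fun y' =>
    ((List.range ((nu (y' + 1)).length)).map (fun x' =>
      A.C (bar nu (y' + 1) x') (Gamma r n lam nu S (x' + 1) (y' + 1)))).prod)).prod

/-- `T_{S^{(s)}}`, where `w_s` is the cycle-factor of the permutation of `t_S`
supported on the letters of the `s`-th component. -/
def TScomp (A : AKPre F q r n Q H) (lam nu : ℕ → List ℕ) (S : ℕ × ℕ × ℕ → ℕ × ℕ)
    (s : ℕ) : H :=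
  A.Tw (restrictPerm (wS r n lam nu S) (bar lam s 0) (bar lam s ((lam s).length)))

/-- `T_{S(i)}`. -/
def TSi (A : AKPre F q r n Q H) (lam nu : ℕ → List ℕ) (S : ℕ × ℕ × ℕ → ℕ × ℕ)
    (i : ℕ) : H :=
  A.Tw (wSi r n lam nu S i)

/-- `D(t,s) = T_{t-1} T_{t-2} ⋯ T_s` (with `D(s,s) = 1`). -/
def D (A : AKPre F q r n Q H) (t s : ℕ) : H :=
  ((List.range (t - s)).reverse.map (fun j => A.T (s + j))).prod

/-- `ū⁺_{α^{(i)}} = ∏_{j=2}^{i+1} ∏_{k=1}^{ᾱ_{(j)}} (L_k − Q_j)`. -/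
def ubar (A : AKPre F q r n Q H) (al : ℕ → List ℕ) (i : ℕ) : H :=
  ((List.range i).map (fun t =>
    ((List.range (bar al (t + 2) 0)).map
      (fun k => A.L (k + 1) - algebraMap F H (Q (t + 2)))).prod)).prod

/-- `u̲⁺_{α^{(i)}} = ∏_{j=i+1}^{r} ∏_{k=1}^{ᾱ_{(j)}} (L_k − Q_j)`. -/
def ulow (A : AKPre F q r n Q H) (al : ℕ → List ℕ) (i : ℕ) : H :=
  ((List.range (r - i)).map (fun t =>
    ((List.range (bar al (i + 1 + t) 0)).map
      (fun k => A.L (k + 1) - algebraMap F H (Q (i + 1 + t)))).prod)).prod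

/-- `u⁺_{γ^{(i)} \ α^{(i)}} = ∏_{j=ᾱ_{(i+1)}+1}^{γ̄_{(i+1)}} (L_j − Q_{i+1})`. -/
def udiff (A : AKPre F q r n Q H) (ga al : ℕ → List ℕ) (i : ℕ) : H :=
  ((List.range (bar ga (i + 1) 0 - bar al (i + 1) 0)).map
    (fun t => A.L (bar al (i + 1) 0 + 1 + t) - algebraMap F H (Q (i + 1)))).prod

/-- The family `{m_{st}}`, over all multipartitions of `n` and all pairs of standard
tableaux, is an `F`-basis of `H` (this characterizes the Ariki–Koike algebra among
the algebras whose generators satisfy the defining relations). -/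
def IsCellular (A : AKPre F q r n Q H) : Prop :=
  Submodule.span F {z : H | ∃ lam u v, IsMulticomp r n lam ∧ IsMultipartition lam ∧
      IsStd r n lam u ∧ IsStd r n lam v ∧ z = A.mst lam u v} = ⊤ ∧
  LinearIndependent F
    (fun p : {p : (ℕ → List ℕ) × Equiv.Perm (Fin n) × Equiv.Perm (Fin n) //
        IsMulticomp r n p.1 ∧ IsMultipartition p.1 ∧ IsStd r n p.1 p.2.1 ∧
          IsStd r n p.1 p.2.2} =>
      A.mst p.1.1 p.1.2.1 p.1.2.2)

theorem mul_mem_Mmod (A : AKPre F q r n Q H) (lam : ℕ → List ℕ) (h : H) :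
    A.m lam * h ∈ A.Mmod lam := by
  have e : A.m lam * h = (MulOpposite.op h) • A.m lam := rfl
  rw [e]
  exact Submodule.smul_mem _ _ (Submodule.mem_span_singleton_self _)

end AKPre

/-- The Ariki–Koike algebra `H_{r,n}`: an algebra with generators satisfying the
defining relations, for which the elements `m_{st}` form an `F`-basis. -/
structure AKAlg (F : Type*) [Field F] (q : F) (r n : ℕ) (Q : ℕ → F)
    (H : Type*) [Ring H] [Algebra F H] extends AKPre F q r n Q H where
  cellular : toAKPre.IsCellular

end AK

/-!
`x_λ` is the sum of the `T_w` over the row stabilizer of `t^λ`, so it suffices that each such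
`T_w` commutes with `u⁺_λ`. Induct on the length of `w`: if `w ≠ 1` it has a descent at some
adjacent pair `a + 1, a + 2`, and these letters must lie in the same row of `t^λ`. Then
`T_w = T_{w s_{a+1}} T_{a+1}` with `w s_{a+1}` again a row stabilizer, and `a + 1` is not one of
the boundaries `λ̄_{(s)}`. For such an `i`, `T_i` commutes with every factor
`∏_{k=1}^{m} (L_k - Q_s)` of `u⁺_λ` (`m = λ̄_{(s)} ≠ i`): it commutes with `L_k` for
`k ∉ {i, i + 1}`, and with `(L_i - Q)(L_{i+1} - Q)` because it commutes with `L_i + L_{i+1}`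
(quadratic relation) and with `L_i L_{i+1}` (the relation `T_i L_i T_i L_i = L_i T_i L_i T_i`,
inherited from `T_0 T_1 T_0 T_1 = T_1 T_0 T_1 T_0` through the braid relations).
-/

namespace AK

section BraidWords

variable {M : Type*} [Monoid M] {a b x : M}

theorem commute_conj_of_braid (hb : a * b * a = b * a * b) (hx : Commute b x) :
    Commute a (b * (a * x * a) * b) := by
  show _ = _
  calc a * (b * (a * x * a) * b) = a * b * a * x * a * b := by simp only [mul_assoc]
    _ = b * a * (b * x) * a * b := by rw [hb]; simp only [mul_assoc]
    _ = b * a * x * (b * a * b) := by rw [hx.eq]; simp only [mul_assoc]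
    _ = b * (a * x * a) * b * a := by rw [← hb]; simp only [mul_assoc]

theorem conj_braid_of_braid (hb : a * b * a = b * a * b) (hx : Commute b x)
    (h : a * x * a * x = x * a * x * a) :
    b * (a * x * a) * b * (a * x * a) = a * x * a * b * (a * x * a) * b := by
  calc b * (a * x * a) * b * (a * x * a) = b * a * x * (a * b * a) * x * a := by
        simp only [mul_assoc]
    _ = b * a * (x * b) * a * b * x * a := by rw [hb]; simp only [mul_assoc]
    _ = b * a * b * x * a * (b * x) * a := by rw [← hx.eq]; simp only [mul_assoc]
    _ = b * a * b * (x * a * x) * b * a := by rw [hx.eq]; simp only [mul_assoc]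
    _ = a * b * (a * x * a * x) * b * a := by rw [← hb]; simp only [mul_assoc]
    _ = a * (b * x) * a * x * (a * b * a) := by rw [h]; simp only [mul_assoc]
    _ = a * x * b * a * (x * b) * a * b := by rw [hx.eq, hb]; simp only [mul_assoc]
    _ = a * x * (b * a * b) * x * a * b := by rw [← hx.eq]; simp only [mul_assoc]
    _ = a * x * a * b * (a * x * a) * b := by rw [← hb]; simp only [mul_assoc]

end BraidWords

section HeckeWords

variable {R : Type*} [Ring R] {a u : R}

theorem commute_add_conj_of_quadratic (m : R) (hu : ∀ z, Commute u z)
    (ha : (a - u) * (a + 1) = 0) : Commute a (u * m + a * m * a) := by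
  have hsq : a * a = u * a + u - a := by
    rw [← sub_eq_zero, ← ha]
    noncomm_ring
  show _ = _
  calc a * (u * m + a * m * a) = u * (a * m) + a * a * (m * a) := by
        rw [mul_add, ← mul_assoc a u, ← (hu a).eq]; noncomm_ring
    _ = u * (m * a) + (u * (a * m) * a + u * (a * m) - a * m * a) := by rw [hsq]; noncomm_ring
    _ = u * (m * a) + (a * m * u * a + a * m * u - a * m * a) := by rw [(hu (a * m)).eq]
    _ = (u * m + a * m * a) * a := by rw [add_mul, mul_assoc (a * m) a a, hsq]; noncomm_ring

theorem commute_mul_conj_of_braid (m : R) (h : a * m * a * m = m * a * m * a) :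
    Commute a (m * (a * m * a)) := by
  show _ = _
  calc a * (m * (a * m * a)) = a * m * a * m * a := by noncomm_ring
    _ = m * (a * m * a) * a := by rw [h]; noncomm_ring

end HeckeWords

section Rows

variable {r n : ℕ} {lam : ℕ → List ℕ} {s s' k k' x y : ℕ}

theorem bar_mono {i j : ℕ} (h : i ≤ j) : bar lam s i ≤ bar lam s j := by
  unfold bar
  gcongr
  exact List.Sublist.sum_le_sum (List.take_sublist_take_left h) (by simp)

theorem bar_le_bar_succ_zero (hs : 1 ≤ s) (i : ℕ) : bar lam s i ≤ bar lam (s + 1) 0 := by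
  obtain ⟨m, rfl⟩ : ∃ m, s = m + 1 := ⟨s - 1, by omega⟩
  simp only [bar, Nat.add_sub_cancel, Finset.sum_range_succ, List.take_zero, List.sum_nil,
    add_zero]
  gcongr
  exact (List.take_sublist i _).sum_le_sum (by simp)

theorem bar_length (hs : 1 ≤ s) : bar lam s (lam s).length = bar lam (s + 1) 0 := by
  obtain ⟨m, rfl⟩ : ∃ m, s = m + 1 := ⟨s - 1, by omega⟩
  simp [bar, Finset.sum_range_succ]

theorem bar_zero_mono (h : s ≤ s') : bar lam s 0 ≤ bar lam s' 0 := by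
  simp only [bar, List.take_zero, List.sum_nil, add_zero]
  exact Finset.sum_le_sum_of_subset (Finset.range_subset_range.2 (by omega))

theorem bar_succ_zero_eq (hlam : IsMulticomp r n lam) : bar lam (r + 1) 0 = n := by
  simp only [bar, List.take_zero, List.sum_nil, add_zero, Nat.add_sub_cancel, ← hlam.1]
  rw [← Finset.Ico_add_one_right_eq_Icc, Finset.sum_Ico_eq_sum_range]
  simp only [Nat.add_sub_cancel, add_comm 1]

theorem bar_le_of_lex (hs : 1 ≤ s) (hlex : s < s' ∨ s = s' ∧ k < k') :
    bar lam s k ≤ bar lam s' (k' - 1) := by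
  rcases hlex with h | ⟨rfl, h⟩
  · calc bar lam s k ≤ bar lam (s + 1) 0 := bar_le_bar_succ_zero hs k
      _ ≤ bar lam s' 0 := bar_zero_mono h
      _ ≤ bar lam s' (k' - 1) := bar_mono (Nat.zero_le _)
  · exact bar_mono (by omega)

theorem lex_le_of_inRow_of_le (hs' : 1 ≤ s') (hx : InRow lam s k x) (hy : InRow lam s' k' y)
    (hxy : x ≤ y) : s < s' ∨ s = s' ∧ k ≤ k' := by
  by_contra hlex
  have := bar_le_of_lex (lam := lam) hs' (by omega : s' < s ∨ s' = s ∧ k' < k)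
  have := hx.1
  have := hy.2
  omega

theorem inRow_unique (hs : 1 ≤ s) (hs' : 1 ≤ s') (hx : InRow lam s k x)
    (hx' : InRow lam s' k' x) : s = s' ∧ k = k' := by
  have := lex_le_of_inRow_of_le hs' hx hx' le_rfl
  have := lex_le_of_inRow_of_le hs hx' hx le_rfl
  omega

theorem exists_inRow (hlam : IsMulticomp r n lam) (hx : 1 ≤ x) (hxn : x ≤ n) :
    ∃ s k, 1 ≤ s ∧ s ≤ r ∧ 1 ≤ k ∧ InRow lam s k x := by
  obtain ⟨t, ht, ht'⟩ := Nat.exists_not_and_succ_of_not_zero_of_exists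
    (p := fun t => x ≤ bar lam (t + 1) 0) (by simp [bar]; omega)
    ⟨r, by rw [bar_succ_zero_eq hlam]; exact hxn⟩
  have htr : t < r := by
    by_contra h
    have := bar_zero_mono (lam := lam) (show r + 1 ≤ t + 1 by omega)
    rw [bar_succ_zero_eq hlam] at this
    omega
  obtain ⟨k, hk, hk'⟩ := Nat.exists_not_and_succ_of_not_zero_of_exists
    (p := fun k => x ≤ bar lam (t + 1) k) ht
    ⟨_, by rw [bar_length (by omega)]; exact ht'⟩
  exact ⟨t + 1, k + 1, by omega, by omega, by omega, by simpa using hk, hk'⟩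

theorem bar_zero_ne_of_inRow (hs : 1 ≤ s) (hx : InRow lam s k x) (hx' : InRow lam s k (x + 1))
    (t : ℕ) : bar lam t 0 ≠ x := by
  rintro rfl
  rcases le_or_gt t s with h | h
  · have := (bar_zero_mono (lam := lam) h).trans (bar_mono (s := s) (Nat.zero_le (k - 1)))
    exact absurd hx.1 (by omega)
  · have := (bar_le_bar_succ_zero (lam := lam) hs k).trans (bar_zero_mono h)
    exact absurd hx'.2 (by omega)

end Rows

section Perms

variable {n : ℕ}

theorem permAct_succ (w : Equiv.Perm (Fin n)) (a : Fin n) :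
    permAct w ((a : ℕ) + 1) = (w a : ℕ) + 1 := by
  rw [permAct, dif_pos ⟨by omega, a.isLt⟩]
  rfl

theorem rowStab_iff {r : ℕ} {lam : ℕ → List ℕ} {w : Equiv.Perm (Fin n)} :
    RowStab r n lam w ↔ ∀ a : Fin n, ∀ s i, 1 ≤ s → s ≤ r → 1 ≤ i →
      InRow lam s i ((a : ℕ) + 1) → InRow lam s i ((w a : ℕ) + 1) := by
  simp only [RowStab, permAct_succ]

theorem RowStab.mul {r : ℕ} {lam : ℕ → List ℕ} {u v : Equiv.Perm (Fin n)}
    (hu : RowStab r n lam u) (hv : RowStab r n lam v) : RowStab r n lam (u * v) := by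
  rw [rowStab_iff] at *
  exact fun a s i h1 h2 h3 h => hu (v a) s i h1 h2 h3 (hv a s i h1 h2 h3 h)

/-- The simple transposition `s_{a+1}`, exchanging the 0-indexed points `a` and `a + 1`. -/
def adjSwap (a : ℕ) (ha : a + 1 < n) : Equiv.Perm (Fin n) :=
  Equiv.swap ⟨a, by omega⟩ ⟨a + 1, ha⟩

theorem eq_one_of_forall_lt_succ {w : Equiv.Perm (Fin n)}
    (h : ∀ a (ha : a + 1 < n), w ⟨a, by omega⟩ < w ⟨a + 1, ha⟩) : w = 1 := by
  cases n with
  | zero => exact Subsingleton.elim _ _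
  | succ m =>
    have hmono : StrictMono w := Fin.strictMono_iff_lt_succ.2 fun i => h i (by omega)
    have hrange : Set.range w = Set.range id := by simp [w.surjective.range_eq]
    exact Equiv.ext (congrFun ((hmono.range_inj strictMono_id).1 hrange))

variable {a : ℕ} (ha : a + 1 < n)

theorem adjSwap_val (z : Fin n) :
    (adjSwap a ha z : ℕ) = if (z : ℕ) = a then a + 1 else if (z : ℕ) = a + 1 then a else z := by
  unfold adjSwap
  rcases eq_or_ne z ⟨a, by omega⟩ with rfl | h1
  · simp
  rcases eq_or_ne z ⟨a + 1, ha⟩ with rfl | h2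
  · simp
  rw [Equiv.swap_apply_of_ne_of_ne h1 h2, if_neg (fun h => h1 (Fin.ext h)),
    if_neg (fun h => h2 (Fin.ext h))]

theorem adjSwap_lt_adjSwap {z z' : Fin n} (h : z < z')
    (hne : ¬((z : ℕ) = a ∧ (z' : ℕ) = a + 1)) : adjSwap a ha z < adjSwap a ha z' := by
  rw [Fin.lt_def] at h ⊢
  rw [adjSwap_val ha, adjSwap_val ha]
  split_ifs <;> omega

theorem permLen_eq_permLen_mul_adjSwap_add_one {w : Equiv.Perm (Fin n)}
    (hd : w ⟨a + 1, ha⟩ < w ⟨a, by omega⟩) :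
    permLen w = permLen (w * adjSwap a ha) + 1 := by
  set σ := adjSwap a ha
  set inv : Equiv.Perm (Fin n) → Finset (Fin n × Fin n) :=
    fun v => Finset.univ.filter (fun p => p.1 < p.2 ∧ v p.2 < v p.1)
  have hσσ : ∀ z, σ (σ z) = z := Equiv.swap_apply_self _ _
  have hmem : ∀ v z z', (z, z') ∈ inv v ↔ z < z' ∧ v z' < v z := by simp [inv]
  -- `p ↦ (σ p.1, σ p.2)` maps the inversions of `w σ` onto those of `w` other than `(a, a + 1)`.
  have hcard : (inv (w * σ)).card = ((inv w).erase (⟨a, by omega⟩, ⟨a + 1, ha⟩)).card := by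
    refine Finset.card_nbij' (Prod.map σ σ) (Prod.map σ σ) ?_ ?_ ?_ ?_
    · rintro ⟨z, z'⟩ h
      rw [Finset.mem_coe, hmem] at h
      obtain ⟨hlt, hwlt⟩ := h
      have hne : ¬((z : ℕ) = a ∧ (z' : ℕ) = a + 1) := by
        rintro ⟨hz, hz'⟩
        have e : σ z = ⟨a + 1, ha⟩ := Fin.ext (by simp [σ, adjSwap_val ha, hz])
        have e' : σ z' = ⟨a, by omega⟩ := Fin.ext (by simp [σ, adjSwap_val ha, hz'])
        rw [Equiv.Perm.mul_apply, Equiv.Perm.mul_apply, e, e'] at hwlt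
        exact lt_asymm hd hwlt
      have hσlt := adjSwap_lt_adjSwap ha hlt hne
      rw [Finset.mem_coe, Finset.mem_erase, hmem]
      refine ⟨fun he => ?_, hσlt, hwlt⟩
      simp only [Prod.map_apply, Prod.mk.injEq] at he
      have hz : (z : ℕ) = a + 1 := by rw [← hσσ z, he.1, adjSwap_val ha]; simp
      have hz' : (z' : ℕ) = a := by rw [← hσσ z', he.2, adjSwap_val ha]; simp
      exact absurd (Fin.lt_def.1 hlt) (by omega)
    · rintro ⟨y, y'⟩ h
      rw [Finset.mem_coe, Finset.mem_erase, hmem] at h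
      obtain ⟨hne, hlt, hwlt⟩ := h
      rw [Finset.mem_coe, hmem, Prod.map_apply, Equiv.Perm.mul_apply, Equiv.Perm.mul_apply,
        hσσ, hσσ]
      refine ⟨adjSwap_lt_adjSwap ha hlt fun h => hne ?_, hwlt⟩
      exact Prod.ext (Fin.ext h.1) (Fin.ext h.2)
    · rintro ⟨z, z'⟩ _
      exact Prod.ext (hσσ z) (hσσ z')
    · rintro ⟨z, z'⟩ _
      exact Prod.ext (hσσ z) (hσσ z')
  change _ = (inv (w * σ)).card + 1
  rw [hcard, Finset.card_erase_add_one]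
  · rfl
  · rw [hmem]
    exact ⟨Fin.mk_lt_mk.2 (by omega), hd⟩

theorem permLen_one : permLen (1 : Equiv.Perm (Fin n)) = 0 := by
  rw [permLen, Finset.card_eq_zero, Finset.filter_eq_empty_iff]
  exact fun _ _ h => lt_asymm h.1 h.2

theorem permLen_adjSwap : permLen (adjSwap a ha) = 1 := by
  have hd : adjSwap a ha ⟨a + 1, ha⟩ < adjSwap a ha ⟨a, by omega⟩ := by
    simp [Fin.lt_def, adjSwap_val ha]
  rw [permLen_eq_permLen_mul_adjSwap_add_one ha hd, adjSwap, Equiv.swap_mul_self, permLen_one]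

end Perms

section RowStabilizer

variable {r n : ℕ} {lam : ℕ → List ℕ} {a : ℕ} (ha : a + 1 < n)

theorem rowStab_adjSwap {s k : ℕ} (hs : 1 ≤ s) (h1 : InRow lam s k (a + 1))
    (h2 : InRow lam s k (a + 2)) : RowStab r n lam (adjSwap a ha) := by
  rw [rowStab_iff]
  intro z s' i hs' _ _ hz
  rw [adjSwap_val ha]
  split_ifs with e1 e2
  · obtain ⟨rfl, rfl⟩ := inRow_unique hs' hs (e1 ▸ hz) h1
    exact h2
  · obtain ⟨rfl, rfl⟩ := inRow_unique hs' hs (e2 ▸ hz) h2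
    exact h1
  · exact hz

theorem exists_inRow_of_descent (hlam : IsMulticomp r n lam) {w : Equiv.Perm (Fin n)}
    (hw : RowStab r n lam w) (hd : w ⟨a + 1, ha⟩ < w ⟨a, by omega⟩) :
    ∃ s k, 1 ≤ s ∧ InRow lam s k (a + 1) ∧ InRow lam s k (a + 2) := by
  obtain ⟨s, k, hs, hsr, hk, h1⟩ := exists_inRow hlam (x := a + 1) (by omega) (by omega)
  obtain ⟨s', k', hs', hsr', hk', h2⟩ := exists_inRow hlam (x := a + 2) (by omega) (by omega)
  have hw1 := rowStab_iff.1 hw ⟨a, by omega⟩ s k hs hsr hk h1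
  have hw2 := rowStab_iff.1 hw ⟨a + 1, ha⟩ s' k' hs' hsr' hk' h2
  have := lex_le_of_inRow_of_le hs' h1 h2 (by omega)
  have := lex_le_of_inRow_of_le hs hw2 hw1 (by rw [Fin.lt_def] at hd; omega)
  obtain ⟨rfl, rfl⟩ : s = s' ∧ k = k' := by omega
  exact ⟨s, k, hs, h1, h2⟩

end RowStabilizer

namespace AKPre

variable {F : Type*} [Field F] {q : F} {r n : ℕ} {Q : ℕ → F}
  {H : Type*} [Ring H] [Algebra F H] (A : AKPre F q r n Q H)

theorem Tw_eq_Tw_mul_adjSwap_mul_T {a : ℕ} (ha : a + 1 < n) {w : Equiv.Perm (Fin n)}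
    (hd : w ⟨a + 1, ha⟩ < w ⟨a, by omega⟩) :
    A.Tw w = A.Tw (w * adjSwap a ha) * A.T (a + 1) := by
  have hlen := permLen_eq_permLen_mul_adjSwap_add_one ha hd
  have hw : w = w * adjSwap a ha * adjSwap a ha := by
    rw [mul_assoc, adjSwap, Equiv.swap_mul_self, mul_one]
  conv_lhs => rw [hw]
  rw [A.Tw_mul _ _ (by rw [← hw, permLen_adjSwap]; exact hlen)]
  exact congrArg _ (A.Tw_simple (a + 1) (by omega) ha)

def murphy (k : ℕ) : H :=
  ((List.range (k - 1)).reverse.map (fun i => A.T (i + 1))).prod * A.T 0 *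
    ((List.range (k - 1)).map (fun i => A.T (i + 1))).prod

theorem L_eq_algebraMap_mul_murphy (k : ℕ) :
    A.L k = algebraMap F H (q ^ (1 - (k : ℤ))) * A.murphy k := rfl

theorem murphy_one : A.murphy 1 = A.T 0 := by
  simp [murphy]

theorem murphy_succ {k : ℕ} (hk : 1 ≤ k) : A.murphy (k + 1) = A.T k * A.murphy k * A.T k := by
  obtain ⟨m, rfl⟩ : ∃ m, k = m + 1 := ⟨k - 1, by omega⟩
  simp only [murphy, Nat.add_sub_cancel, List.range_succ, List.reverse_append, List.map_append,
    List.map_cons, List.map_nil, List.prod_append, List.prod_cons, List.prod_nil,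
    List.reverse_cons, List.reverse_nil, List.nil_append, mul_one]
  noncomm_ring

theorem commute_T_murphy_of_lt {i k : ℕ} (hk : 1 ≤ k) (hki : k < i) (hi : i < n) :
    Commute (A.T i) (A.murphy k) := by
  have hT : ∀ j < k - 1, Commute (A.T i) (A.T (j + 1)) := fun j hj =>
    (A.rel_comm (j + 1) i (by omega) hi).symm
  refine .mul_right (.mul_right ?_ (A.rel_comm 0 i (by omega) hi).symm) ?_ <;>
    refine Commute.list_prod_right _ _ fun y hy => ?_ <;>
    · simp only [List.mem_map, List.mem_reverse, List.mem_range] at hy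
      obtain ⟨j, hj, rfl⟩ := hy
      exact hT j hj

theorem commute_T_murphy_of_gt {i k : ℕ} (hi : 1 ≤ i) (hik : i + 1 < k) (hk : k ≤ n) :
    Commute (A.T i) (A.murphy k) := by
  induction k, hik using Nat.le_induction with
  | base =>
    rw [A.murphy_succ (by omega), A.murphy_succ hi]
    exact commute_conj_of_braid (A.rel_braid i hi (by omega))
      (A.commute_T_murphy_of_lt hi (by omega) (by omega))
  | succ k hik ih =>
    have hT : Commute (A.T i) (A.T k) := A.rel_comm i k (by omega) (by omega)
    rw [A.murphy_succ (by omega)]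
    exact (hT.mul_right (ih (by omega))).mul_right hT

theorem T_murphy_braid {i : ℕ} (hi : 1 ≤ i) (hin : i < n) :
    A.T i * A.murphy i * A.T i * A.murphy i = A.murphy i * A.T i * A.murphy i * A.T i := by
  induction i, hi using Nat.le_induction with
  | base => rw [murphy_one]; exact (A.rel_T0T1 (by omega)).symm
  | succ i hi ih =>
    rw [A.murphy_succ hi]
    exact conj_braid_of_braid (A.rel_braid i hi hin)
      (A.commute_T_murphy_of_lt hi (by omega) hin) (ih (by omega))

theorem commute_T_L_of_lt {i k : ℕ} (hk : 1 ≤ k) (hki : k < i) (hi : i < n) :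
    Commute (A.T i) (A.L k) :=
  (Algebra.commute_algebraMap_right _ _).mul_right (A.commute_T_murphy_of_lt hk hki hi)

theorem commute_T_L_of_gt {i k : ℕ} (hi : 1 ≤ i) (hik : i + 1 < k) (hk : k ≤ n) :
    Commute (A.T i) (A.L k) :=
  (Algebra.commute_algebraMap_right _ _).mul_right (A.commute_T_murphy_of_gt hi hik hk)

theorem commute_T_L_sub_mul_L_succ_sub (hq0 : q ≠ 0) {i : ℕ} (hi : 1 ≤ i) (hin : i < n)
    (c : F) :
    Commute (A.T i) ((A.L i - algebraMap F H c) * (A.L (i + 1) - algebraMap F H c)) := by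
  set u := algebraMap F H q
  have hL : A.L i = q ^ (-(i : ℤ)) • (u * A.murphy i) := by
    rw [L_eq_algebraMap_mul_murphy, Algebra.smul_def, ← mul_assoc, ← map_mul,
      ← zpow_add_one₀ hq0]
    ring_nf
  have hL' : A.L (i + 1) = q ^ (-(i : ℤ)) • (A.T i * A.murphy i * A.T i) := by
    rw [L_eq_algebraMap_mul_murphy, A.murphy_succ hi, Algebra.smul_def]
    push_cast
    ring_nf
  have hsum : Commute (A.T i) (A.L i + A.L (i + 1)) := by
    rw [hL, hL', ← smul_add]
    exact (commute_add_conj_of_quadratic _ (Algebra.commute_algebraMap_left q)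
      (A.rel_quad i hi hin)).smul_right _
  have hprod : Commute (A.T i) (A.L i * A.L (i + 1)) := by
    rw [hL, hL', smul_mul_smul_comm, mul_assoc]
    exact ((Algebra.commute_algebraMap_right q _).mul_right
      (commute_mul_conj_of_braid _ (A.T_murphy_braid hi hin))).smul_right _
  have hexpand : (A.L i - algebraMap F H c) * (A.L (i + 1) - algebraMap F H c) =
      A.L i * A.L (i + 1) - algebraMap F H c * (A.L i + A.L (i + 1)) +
        algebraMap F H (c * c) := by
    rw [mul_add, ← (Algebra.commute_algebraMap_right c (A.L i)).eq, map_mul]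
    noncomm_ring
  rw [hexpand]
  exact (hprod.sub_right ((Algebra.commute_algebraMap_right _ _).mul_right hsum)).add_right
    (Algebra.commute_algebraMap_right _ _)

def prodLSub (m : ℕ) (c : F) : H :=
  ((List.range m).map (fun k => A.L (k + 1) - algebraMap F H c)).prod

theorem uplus_eq_prod (lam : ℕ → List ℕ) :
    A.uplus lam =
      ((List.range (r - 1)).map fun t => A.prodLSub (bar lam (t + 2) 0) (Q (t + 2))).prod :=
  rfl

theorem prodLSub_succ (m : ℕ) (c : F) :
    A.prodLSub (m + 1) c = A.prodLSub m c * (A.L (m + 1) - algebraMap F H c) := by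
  simp [prodLSub, List.range_succ]

theorem commute_T_prodLSub_of_lt {i m : ℕ} (c : F) (hmi : m < i) (hin : i < n) :
    Commute (A.T i) (A.prodLSub m c) := by
  induction m with
  | zero => exact Commute.one_right _
  | succ m ih =>
    rw [prodLSub_succ]
    exact (ih (by omega)).mul_right
      ((A.commute_T_L_of_lt (by omega) hmi hin).sub_right (Algebra.commute_algebraMap_right _ _))

theorem commute_T_prodLSub_of_gt (hq0 : q ≠ 0) {i m : ℕ} (c : F) (hi : 1 ≤ i) (him : i < m)
    (hmn : m ≤ n) : Commute (A.T i) (A.prodLSub m c) := by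
  induction m, him using Nat.le_induction with
  | base =>
    obtain ⟨j, rfl⟩ : ∃ j, i = j + 1 := ⟨i - 1, by omega⟩
    rw [prodLSub_succ, prodLSub_succ, mul_assoc]
    exact (A.commute_T_prodLSub_of_lt c (by omega) (by omega)).mul_right
      (A.commute_T_L_sub_mul_L_succ_sub hq0 hi (by omega) c)
  | succ m him ih =>
    rw [prodLSub_succ]
    exact (ih (by omega)).mul_right ((A.commute_T_L_of_gt hi (by omega) hmn).sub_right
      (Algebra.commute_algebraMap_right _ _))

theorem commute_T_uplus (hq0 : q ≠ 0) {lam : ℕ → List ℕ} (hlam : IsMulticomp r n lam)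
    {i : ℕ} (hi : 1 ≤ i) (hin : i < n) (hbar : ∀ t, bar lam t 0 ≠ i) :
    Commute (A.T i) (A.uplus lam) := by
  rw [uplus_eq_prod]
  refine Commute.list_prod_right _ _ fun y hy => ?_
  obtain ⟨t, ht, rfl⟩ := List.mem_map.1 hy
  have hbn : bar lam (t + 2) 0 ≤ n :=
    bar_succ_zero_eq hlam ▸ bar_zero_mono (by rw [List.mem_range] at ht; omega)
  rcases lt_or_gt_of_ne (hbar (t + 2)) with h | h
  · exact A.commute_T_prodLSub_of_lt _ h hin
  · exact A.commute_T_prodLSub_of_gt hq0 _ hi h hbn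

theorem commute_uplus_Tw (hq0 : q ≠ 0) {lam : ℕ → List ℕ} (hlam : IsMulticomp r n lam)
    (w : Equiv.Perm (Fin n)) (hw : RowStab r n lam w) : Commute (A.uplus lam) (A.Tw w) := by
  induction hN : permLen w using Nat.strong_induction_on generalizing w with
  | _ N ih =>
    by_cases hdesc : ∃ a, ∃ ha : a + 1 < n, w ⟨a + 1, ha⟩ < w ⟨a, by omega⟩
    · obtain ⟨a, ha, hd⟩ := hdesc
      obtain ⟨s, k, hs, h1, h2⟩ := exists_inRow_of_descent ha hlam hw hd
      have hlen := permLen_eq_permLen_mul_adjSwap_add_one ha hd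
      rw [A.Tw_eq_Tw_mul_adjSwap_mul_T ha hd]
      exact (ih _ (by omega) _ (hw.mul (rowStab_adjSwap ha hs h1 h2)) rfl).mul_right
        (A.commute_T_uplus hq0 hlam (by omega) ha (bar_zero_ne_of_inRow hs h1 h2)).symm
    · simp only [not_exists, not_lt] at hdesc
      rw [eq_one_of_forall_lt_succ fun a ha => (hdesc a ha).lt_of_ne
        (w.injective.ne (by simp [Fin.ext_iff])), A.Tw_one]
      exact Commute.one_right _

theorem commute_x_uplus (hq0 : q ≠ 0) {lam : ℕ → List ℕ} (hlam : IsMulticomp r n lam) :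
    Commute (A.x lam) (A.uplus lam) :=
  Commute.sum_left _ _ _ fun w hw =>
    (A.commute_uplus_Tw hq0 hlam w (Finset.mem_filter.1 hw).2).symm

end AKPre

end AK

theorem statement3_general {F : Type*} [Field F] {q : F} {r n : ℕ} {Q : ℕ → F}
    {H : Type*} [Ring H] [Algebra F H]
    (hq0 : q ≠ 0)
    (A : AK.AKAlg F q r n Q H)
    (lam : ℕ → List ℕ) (hlam : AK.IsMulticomp r n lam) :
    A.toAKPre.x lam * A.toAKPre.uplus lam = A.toAKPre.uplus lam * A.toAKPre.x lam :=
  (A.toAKPre.commute_x_uplus hq0 hlam).eq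

/-- for every `r`-multicomposition `λ` of `n`, the elements `x_λ` and
`u⁺_λ` of the Ariki–Koike algebra commute. -/
theorem statement3 {F : Type*} [Field F] {q : F} {r n : ℕ} {Q : ℕ → F}
    {H : Type*} [Ring H] [Algebra F H]
    (hq0 : q ≠ 0) (hq1 : q ≠ 1) (hr : 1 ≤ r) (hn : 1 ≤ n)
    (A : AK.AKAlg F q r n Q H)
    (lam : ℕ → List ℕ) (hlam : AK.IsMulticomp r n lam) :
    A.toAKPre.x lam * A.toAKPre.uplus lam = A.toAKPre.uplus lam * A.toAKPre.x lam :=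
  statement3_general hq0 A lam hlam
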